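/- Let n ≥ 4 and μ̄ = e_1. For every ν ∈ B(D_n, μ̄) with ν ≠ μ̄, writing μ̄ − ν = Σ_{i=1}^n d_i α_i^∨, one has d_1 ≥ 1/2; consequently (μ̄ − (1/2)α_1^∨) − ν is a nonnegative rational combination of the simple coroots, i.e. μ̄ − (1/2)α_1^∨ is the greatest element of B(D_n, μ̄) ∖ {μ̄} in the dominance order. -/

import Mathlib

open Finset

/-- The simple coroots of type `D_n` (0-indexed): `α_i^∨ = e_i − e_{i+1}` for the first `n−1`
nodes and `α_n^∨ = e_{n−1} + e_n` for the last node. -/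
def corootD (n : ℕ) (i : Fin n) : Fin n → ℚ :=
  fun j =>
    if (i : ℕ) + 1 < n then
      (if j = i then 1 else 0) - (if (j : ℕ) = (i : ℕ) + 1 then 1 else 0)
    else (if (j : ℕ) = n - 2 then 1 else 0) + (if (j : ℕ) = n - 1 then 1 else 0)

/-- The Chen–Fargues–Shen description of the Kottwitz set `B(D_n, μ̄)` for a minuscule
fundamental coweight `μ̄` of type `D_n`: vectors `ν ∈ ℚ^n` with
(i) `ν_1 ≥ ⋯ ≥ ν_{n−1} ≥ ν_n` and `ν_{n−1} + ν_n ≥ 0`,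
(ii) `μ̄ − ν = Σ_i d_i α_i^∨` with all `d_i ≥ 0`, and
(iii) `d_i ∈ ℤ` for every `i ≤ n−1` with `ν_i ≠ ν_{i+1}`, and `d_n ∈ ℤ` if
`ν_{n−1} + ν_n ≠ 0`. -/
def BsetD (n : ℕ) (μ : Fin n → ℚ) : Set (Fin n → ℚ) :=
  {ν | (∀ i j : Fin n, (j : ℕ) = (i : ℕ) + 1 → ν j ≤ ν i) ∧
    (∀ i j : Fin n, (i : ℕ) = n - 2 → (j : ℕ) = n - 1 → 0 ≤ ν i + ν j) ∧
    ∃ d : Fin n → ℚ, (∀ i, 0 ≤ d i) ∧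
      (∀ j, μ j - ν j = ∑ i : Fin n, d i * corootD n i j) ∧
      (∀ i j : Fin n, (j : ℕ) = (i : ℕ) + 1 → ν i ≠ ν j → ∃ m : ℤ, d i = (m : ℚ)) ∧
      (∀ k : Fin n, (k : ℕ) = n - 1 →
        ∀ i j : Fin n, (i : ℕ) = n - 2 → (j : ℕ) = n - 1 → ν i + ν j ≠ 0 →
          ∃ m : ℤ, d k = (m : ℚ))}

lemma sum_coroot (n : ℕ) (hn : 4 ≤ n) (d : Fin n → ℚ) (j : Fin n) :
    ∑ i : Fin n, d i * corootD n i j =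
      (if (j : ℕ) + 1 < n then d j else 0)
      - (if h : 0 < (j : ℕ) then d ⟨(j : ℕ) - 1, by omega⟩ else 0)
      + (if n - 2 ≤ (j : ℕ) then d ⟨n - 1, by omega⟩ else 0) := by
  have key : ∀ i : Fin n, d i * corootD n i j =
      (if i = j then if (j : ℕ) + 1 < n then d i else 0 else 0)
      - (if (i : ℕ) + 1 = (j : ℕ) then d i else 0)
      + (if i = (⟨n - 1, by omega⟩ : Fin n) then
          (if n - 2 ≤ (j : ℕ) then d i else 0) else 0) := by
    intro i
    unfold corootD
    by_cases hi : (i : ℕ) + 1 < n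
    · have hne : i ≠ (⟨n - 1, by omega⟩ : Fin n) := by
        intro h; apply absurd (congrArg Fin.val h); simp; omega
      rw [if_pos hi, if_neg hne]
      by_cases h1 : i = j
      · subst h1
        have h2 : ¬ ((i : ℕ) + 1 = (i : ℕ)) := by omega
        rw [if_pos rfl, if_pos rfl, if_pos hi, if_neg h2]
        have : ¬ ((i:ℕ) = (i:ℕ) + 1) := by omega
        rw [if_neg this]; ring
      · have h1' : j ≠ i := fun h => h1 h.symm
        rw [if_neg h1, if_neg h1']
        by_cases h2 : (i : ℕ) + 1 = (j : ℕ)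
        · rw [if_pos h2, if_pos h2.symm]; ring
        · rw [if_neg h2, if_neg (fun h => h2 (Eq.symm h))]; ring
    · have hieq : i = (⟨n - 1, by omega⟩ : Fin n) := by
        apply Fin.ext; simp; omega
      rw [if_neg hi, if_pos hieq]
      have h1 : i ≠ j ∨ ¬ ((j:ℕ) + 1 < n) := by
        by_cases h : i = j
        · right; subst h; omega
        · left; exact h
      have hij1 : ¬ ((i : ℕ) + 1 = (j : ℕ)) := by
        have := j.isLt; omega
      rw [if_neg hij1]
      have hfirst : (if i = j then if (j : ℕ) + 1 < n then d i else 0 else 0) = 0 := by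
        rcases h1 with h | h
        · rw [if_neg h]
        · rw [if_neg h]; split <;> rfl
      rw [hfirst]
      have hival : (i : ℕ) = n - 1 := by omega
      by_cases hj2 : (j : ℕ) = n - 2
      · have : ¬ ((j : ℕ) = n - 1) := by omega
        rw [if_pos hj2, if_neg this, if_pos (by omega : n - 2 ≤ (j:ℕ))]; ring
      · by_cases hj1 : (j : ℕ) = n - 1
        · rw [if_neg hj2, if_pos hj1, if_pos (by omega : n - 2 ≤ (j:ℕ))]; ring
        · rw [if_neg hj2, if_neg hj1, if_neg (by omega : ¬ (n - 2 ≤ (j:ℕ)))]; ring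
  rw [Finset.sum_congr rfl (fun i _ => key i)]
  rw [Finset.sum_add_distrib, Finset.sum_sub_distrib]
  rw [Finset.sum_ite_eq' Finset.univ j (fun i => if (j : ℕ) + 1 < n then d i else 0)]
  rw [Finset.sum_ite_eq' Finset.univ (⟨n - 1, by omega⟩ : Fin n)
      (fun i => if n - 2 ≤ (j : ℕ) then d i else 0)]
  simp only [Finset.mem_univ, if_true]
  congr 1
  congr 1
  by_cases hj : 0 < (j : ℕ)
  · rw [dif_pos hj]
    have : ∀ i : Fin n, ((i : ℕ) + 1 = (j : ℕ)) ↔ (i = (⟨(j:ℕ) - 1, by omega⟩ : Fin n)) := by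
      intro i; rw [Fin.ext_iff]; simp; omega
    rw [Finset.sum_congr rfl (fun i _ => by rw [if_congr (this i) rfl rfl])]
    rw [Finset.sum_ite_eq' Finset.univ _ d]
    simp
  · rw [dif_neg hj]
    have : ∀ i : Fin n, ¬ ((i : ℕ) + 1 = (j : ℕ)) := by intro i; omega
    rw [Finset.sum_congr rfl (fun i _ => by rw [if_neg (this i)])]
    simp

lemma sum_coroot_mk (n : ℕ) (hn : 4 ≤ n) (d : Fin n → ℚ) (k : ℕ) (hk : k < n) :
    ∑ i : Fin n, d i * corootD n i ⟨k, hk⟩ =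
      (if k + 1 < n then d ⟨k, hk⟩ else 0)
      - (if h : 0 < k then d ⟨k - 1, by omega⟩ else 0)
      + (if n - 2 ≤ k then d ⟨n - 1, by omega⟩ else 0) := by
  exact sum_coroot n hn d ⟨k, hk⟩

lemma coroot_unique (n : ℕ) (hn : 4 ≤ n) (d d' : Fin n → ℚ)
    (h : ∀ j : Fin n, ∑ i : Fin n, d i * corootD n i j
        = ∑ i : Fin n, d' i * corootD n i j) : d = d' := by
  have H : ∀ (k : ℕ) (hk : k < n),
      (if k + 1 < n then d ⟨k, hk⟩ else 0)
      - (if h : 0 < k then d ⟨k - 1, by omega⟩ else 0)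
      + (if n - 2 ≤ k then d ⟨n - 1, by omega⟩ else 0)
      = (if k + 1 < n then d' ⟨k, hk⟩ else 0)
      - (if h : 0 < k then d' ⟨k - 1, by omega⟩ else 0)
      + (if n - 2 ≤ k then d' ⟨n - 1, by omega⟩ else 0) := by
    intro k hk
    rw [← sum_coroot_mk n hn d k hk, ← sum_coroot_mk n hn d' k hk]
    exact h ⟨k, hk⟩
  have Hmid : ∀ (k : ℕ) (hk : k ≤ n - 3), d ⟨k, by omega⟩ = d' ⟨k, by omega⟩ := by
    intro k
    induction k with
    | zero =>
      intro hk
      have this := H 0 (by omega)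
      simp only [if_pos (show 0 + 1 < n by omega), dif_neg (show ¬ 0 < 0 by omega),
        if_neg (show ¬ n - 2 ≤ 0 by omega)] at this
      simpa using this
    | succ k ih =>
      intro hk
      have ihk := ih (by omega)
      have this := H (k + 1) (by omega)
      simp only [if_pos (show k + 1 + 1 < n by omega), dif_pos (show 0 < k + 1 by omega),
        if_neg (show ¬ n - 2 ≤ k + 1 by omega), Nat.add_sub_cancel] at this
      linarith [this, ihk]
  have Hn3 : d ⟨n - 3, by omega⟩ = d' ⟨n - 3, by omega⟩ := Hmid (n - 3) le_rfl
  have hmk : (⟨n - 2 - 1, by omega⟩ : Fin n) = (⟨n - 3, by omega⟩ : Fin n) := by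
    apply Fin.ext; simp; omega
  have hmk2 : (⟨n - 1 - 1, by omega⟩ : Fin n) = (⟨n - 2, by omega⟩ : Fin n) := by
    apply Fin.ext; simp; omega
  have E1 := H (n - 2) (by omega)
  simp only [if_pos (show n - 2 + 1 < n by omega), dif_pos (show 0 < n - 2 by omega),
    if_pos (show n - 2 ≤ n - 2 by omega), hmk] at E1
  have E2 := H (n - 1) (by omega)
  simp only [if_neg (show ¬ n - 1 + 1 < n by omega), dif_pos (show 0 < n - 1 by omega),
    if_pos (show n - 2 ≤ n - 1 by omega), hmk2] at E2
  have hd2 : d ⟨n - 2, by omega⟩ = d' ⟨n - 2, by omega⟩ := by linarith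
  have hd1 : d ⟨n - 1, by omega⟩ = d' ⟨n - 1, by omega⟩ := by linarith
  funext i
  have hi : (i : ℕ) ≤ n - 3 ∨ (i : ℕ) = n - 2 ∨ (i : ℕ) = n - 1 := by
    have := i.isLt; omega
  rcases hi with h1 | h1 | h1
  · have : i = (⟨(i : ℕ), i.isLt⟩ : Fin n) := by apply Fin.ext; simp
    rw [this]
    exact Hmid (i : ℕ) h1
  · have : i = (⟨n - 2, by omega⟩ : Fin n) := by apply Fin.ext; simpa using h1
    rw [this]; exact hd2
  · have : i = (⟨n - 1, by omega⟩ : Fin n) := by apply Fin.ext; simpa using h1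
    rw [this]; exact hd1

lemma nu_eq_mu (n : ℕ) (hn : 4 ≤ n) (d ν : Fin n → ℚ)
    (hdnn : ∀ i, 0 ≤ d i)
    (hd0 : d ⟨0, by have := hdnn; omega⟩ = 0)
    (e0 : (1 : ℚ) - ν ⟨0, by have := hdnn; omega⟩ = d ⟨0, by have := hdnn; omega⟩)
    (emid : ∀ (k : ℕ) (hk1 : 1 ≤ k) (hk2 : k ≤ n - 3),
      -ν ⟨k, by omega⟩ = d ⟨k, by omega⟩ - d ⟨k - 1, by omega⟩)
    (eN2 : -ν ⟨n - 2, by omega⟩ =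
      d ⟨n - 2, by omega⟩ - d ⟨n - 3, by omega⟩ + d ⟨n - 1, by omega⟩)
    (eN1 : -ν ⟨n - 1, by omega⟩ = -d ⟨n - 2, by omega⟩ + d ⟨n - 1, by omega⟩)
    (hnn : ∀ (k : ℕ) (hk : k ≤ n - 2), 0 ≤ ν ⟨k, by omega⟩) :
    ν = fun j : Fin n => if (j : ℕ) = 0 then (1 : ℚ) else 0 := by
  have hz : ∀ (k : ℕ) (hk : k ≤ n - 3),
      d ⟨k, by omega⟩ = 0 ∧ ν ⟨k, by omega⟩ = (if k = 0 then 1 else 0) := by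
    intro k
    induction k with
    | zero =>
      intro _
      refine ⟨hd0, ?_⟩
      rw [if_pos rfl]
      linarith [e0, hd0]
    | succ k ih =>
      intro hk
      obtain ⟨ihd, _⟩ := ih (by omega)
      have hm := emid (k + 1) (by omega) hk
      simp only [Nat.add_sub_cancel] at hm
      have h1 := hnn (k + 1) (by omega)
      have h2 := hdnn ⟨k + 1, by omega⟩
      constructor
      · linarith [hm, ihd, h1, h2]
      · rw [if_neg (show ¬ k + 1 = 0 by omega)]
        linarith [hm, ihd, h1, h2]
  obtain ⟨hdn3, _⟩ := hz (n - 3) le_rfl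
  have h1 := hnn (n - 2) le_rfl
  have h2 := hdnn ⟨n - 2, by omega⟩
  have h3 := hdnn ⟨n - 1, by omega⟩
  have hdN2 : d ⟨n - 2, by omega⟩ = 0 := by linarith [eN2]
  have hdN1 : d ⟨n - 1, by omega⟩ = 0 := by linarith [eN2]
  have hνN2 : ν ⟨n - 2, by omega⟩ = 0 := by linarith [eN2]
  have hνN1 : ν ⟨n - 1, by omega⟩ = 0 := by linarith [eN1]
  funext j
  have hj : (j : ℕ) ≤ n - 3 ∨ (j : ℕ) = n - 2 ∨ (j : ℕ) = n - 1 := by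
    have := j.isLt; omega
  rcases hj with h1' | h1' | h1'
  · have hje : j = (⟨(j : ℕ), j.isLt⟩ : Fin n) := by apply Fin.ext; simp
    rw [hje]
    exact (hz (j : ℕ) h1').2
  · have hje : j = (⟨n - 2, by omega⟩ : Fin n) := by apply Fin.ext; simpa using h1'
    rw [hje]
    simp only [if_neg (show ¬ n - 2 = 0 by omega)]
    exact hνN2
  · have hje : j = (⟨n - 1, by omega⟩ : Fin n) := by apply Fin.ext; simpa using h1'
    rw [hje]
    simp only [if_neg (show ¬ n - 1 = 0 by omega)]
    exact hνN1

lemma sum_sub_half (n : ℕ) (hn : 4 ≤ n) (d : Fin n → ℚ) (j : Fin n) :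
    ∑ i : Fin n,
        (d i - (if i = (⟨0, by have := d; omega⟩ : Fin n) then (1 : ℚ) / 2 else 0)) * corootD n i j
      = (∑ i : Fin n, d i * corootD n i j)
        - (1 / 2) * corootD n ⟨0, by have := d; omega⟩ j := by
  simp only [sub_mul, ite_mul, zero_mul]
  rw [Finset.sum_sub_distrib]
  congr 1
  rw [Finset.sum_ite_eq' Finset.univ (⟨0, by omega⟩ : Fin n)
    (fun i => 1 / 2 * corootD n i j)]
  simp

set_option maxHeartbeats 1000000 in
/-- Type `D_n`, `n ≥ 4`, `μ̄ = e_1`: for every `ν ∈ B(D_n, μ̄)` with `ν ≠ μ̄`, writing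
`μ̄ − ν = Σ_i d_i α_i^∨` one has `d_1 ≥ 1/2`, and consequently `(μ̄ − (1/2) α_1^∨) − ν`
is a nonnegative rational combination of the simple coroots, i.e. `μ̄ − (1/2) α_1^∨` is the
greatest element of `B(D_n, μ̄) ∖ {μ̄}` in the dominance order. -/
theorem muD1_sub_half_coroot_maximal (n : ℕ) (hn : 4 ≤ n) :
    ∀ ν ∈ BsetD n (fun j => if (j : ℕ) = 0 then 1 else 0),
      ν ≠ (fun j : Fin n => if (j : ℕ) = 0 then (1 : ℚ) else 0) →
      ∀ d : Fin n → ℚ,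
        (∀ j : Fin n, (if (j : ℕ) = 0 then (1 : ℚ) else 0) - ν j
            = ∑ i : Fin n, d i * corootD n i j) →
        1 / 2 ≤ d ⟨0, by omega⟩ ∧
        ∃ c : Fin n → ℚ, (∀ i, 0 ≤ c i) ∧
          ∀ j : Fin n, ((if (j : ℕ) = 0 then (1 : ℚ) else 0)
                - (1 / 2) * corootD n ⟨0, by omega⟩ j) - ν j
            = ∑ i : Fin n, c i * corootD n i j := by
  intro ν hν hne d hd
  obtain ⟨hdom, hpair, d', hd'nn, hd'sum, hint, _⟩ := hν
  -- the coefficients are unique, so d = d'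
  have hdd : d = d' := by
    apply coroot_unique n hn d d'
    intro j
    have h1 := hd j
    have h2 := hd'sum j
    simp only at h2
    linarith
  subst hdd
  rename' hd'nn => hdnn
  -- evaluate the defining equation at each coordinate
  have hdk : ∀ (k : ℕ) (hk : k < n),
      (if k = 0 then (1 : ℚ) else 0) - ν ⟨k, hk⟩ =
        (if k + 1 < n then d ⟨k, hk⟩ else 0)
        - (if h : 0 < k then d ⟨k - 1, by omega⟩ else 0)
        + (if n - 2 ≤ k then d ⟨n - 1, by omega⟩ else 0) := by
    intro k hk
    rw [← sum_coroot_mk n hn d k hk]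
    exact hd ⟨k, hk⟩
  have e0 : (1 : ℚ) - ν ⟨0, by omega⟩ = d ⟨0, by omega⟩ := by
    have h := hdk 0 (by omega)
    simp only [if_pos rfl, if_true, if_pos (show 0 + 1 < n by omega),
      dif_neg (show ¬ 0 < 0 by omega), if_neg (show ¬ n - 2 ≤ 0 by omega)] at h
    linarith
  have emid : ∀ (k : ℕ) (hk1 : 1 ≤ k) (hk2 : k ≤ n - 3),
      -ν ⟨k, by omega⟩ = d ⟨k, by omega⟩ - d ⟨k - 1, by omega⟩ := by
    intro k hk1 hk2
    have h := hdk k (by omega)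
    simp only [if_neg (show ¬ k = 0 by omega), if_pos (show k + 1 < n by omega),
      dif_pos (show 0 < k by omega), if_neg (show ¬ n - 2 ≤ k by omega)] at h
    linarith
  have hmk : (⟨n - 2 - 1, by omega⟩ : Fin n) = (⟨n - 3, by omega⟩ : Fin n) := by
    apply Fin.ext; simp; omega
  have hmk2 : (⟨n - 1 - 1, by omega⟩ : Fin n) = (⟨n - 2, by omega⟩ : Fin n) := by
    apply Fin.ext; simp; omega
  have eN2 : -ν ⟨n - 2, by omega⟩ =
      d ⟨n - 2, by omega⟩ - d ⟨n - 3, by omega⟩ + d ⟨n - 1, by omega⟩ := by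
    have h := hdk (n - 2) (by omega)
    simp only [if_neg (show ¬ n - 2 = 0 by omega), if_pos (show n - 2 + 1 < n by omega),
      dif_pos (show 0 < n - 2 by omega), if_pos (show n - 2 ≤ n - 2 by omega), hmk] at h
    linarith
  have eN1 : -ν ⟨n - 1, by omega⟩ = -d ⟨n - 2, by omega⟩ + d ⟨n - 1, by omega⟩ := by
    have h := hdk (n - 1) (by omega)
    simp only [if_neg (show ¬ n - 1 = 0 by omega), if_neg (show ¬ n - 1 + 1 < n by omega),
      dif_pos (show 0 < n - 1 by omega), if_pos (show n - 2 ≤ n - 1 by omega), hmk2] at h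
    linarith
  -- monotonicity of ν
  have mono : ∀ (m : ℕ) (j k : Fin n), (k : ℕ) = (j : ℕ) + m → ν k ≤ ν j := by
    intro m
    induction m with
    | zero =>
      intro j k hjk
      have : j = k := Fin.ext (by omega)
      rw [this]
    | succ m ih =>
      intro j k hjk
      have hb : (j : ℕ) + m < n := by have := k.isLt; omega
      have h1 := ih j ⟨(j : ℕ) + m, hb⟩ rfl
      have h2 := hdom ⟨(j : ℕ) + m, hb⟩ k (show (k : ℕ) = (j : ℕ) + m + 1 by omega)
      linarith
  have hN2nn : 0 ≤ ν ⟨n - 2, by omega⟩ := by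
    have hp := hpair ⟨n - 2, by omega⟩ ⟨n - 1, by omega⟩ rfl rfl
    have hle := hdom ⟨n - 2, by omega⟩ ⟨n - 1, by omega⟩ (show n - 1 = n - 2 + 1 by omega)
    linarith
  have hnn : ∀ (k : ℕ) (hk : k ≤ n - 2), 0 ≤ ν ⟨k, by omega⟩ := by
    intro k hk
    have := mono (n - 2 - k) ⟨k, by omega⟩ ⟨n - 2, by omega⟩ (show n - 2 = k + (n - 2 - k) by omega)
    linarith [hN2nn]
  -- d_0 > 0 (otherwise ν = μ)
  have hd0pos : 0 < d ⟨0, by omega⟩ := by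
    rcases lt_or_eq_of_le (hdnn ⟨0, by omega⟩) with h | h
    · exact h
    · exact absurd (nu_eq_mu n hn d ν hdnn h.symm e0 emid eN2 eN1 hnn) hne
  -- d_0 ≥ 1/2
  have hhalf : 1 / 2 ≤ d ⟨0, by omega⟩ := by
    by_cases hcase : ν ⟨0, by omega⟩ = ν ⟨1, by omega⟩
    · have h1 := emid 1 le_rfl (by omega)
      simp only [show (1 : ℕ) - 1 = 0 from rfl] at h1
      have h2 := hdnn ⟨1, by omega⟩
      linarith [e0, h1, h2, hcase]
    · obtain ⟨m, hm⟩ := hint ⟨0, by omega⟩ ⟨1, by omega⟩ rfl hcase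
      have hm1 : (1 : ℤ) ≤ m := by
        by_contra hc
        push_neg at hc
        have : (m : ℚ) ≤ 0 := by exact_mod_cast (by omega : m ≤ 0)
        linarith [hd0pos, hm]
      have : (1 : ℚ) ≤ (m : ℚ) := by exact_mod_cast hm1
      linarith [hm]
  refine ⟨hhalf, fun i => d i - (if i = (⟨0, by omega⟩ : Fin n) then 1 / 2 else 0), ?_, ?_⟩
  · intro i
    show 0 ≤ d i - (if i = (⟨0, by omega⟩ : Fin n) then 1 / 2 else 0)
    by_cases hi : i = (⟨0, by omega⟩ : Fin n)
    · rw [if_pos hi, hi]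
      linarith
    · rw [if_neg hi]
      simpa using hdnn i
  · intro j
    rw [sum_sub_half n hn d j, ← hd j]
    ring
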